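/- (Convergence of the oscillatory dissipation integral.) Let η ∈ C²([0,∞)) satisfy η(0) ≥ 0, η′(t) > 0 and η″(t) > 0 for all t ≥ 0, and let σ(η) = Σ_{n≥1}(αₙ cos(nη) + βₙ sin(nη)) be a 2π-periodic zero-mean function with A₁ := Σ_{n≥1}(|αₙ|+|βₙ|) < ∞. Then the improper integral ∫₀^∞ σ(η(s))/(1+s) ds converges to a finite real number σ_∞; quantitatively, for all T₀ < T₁ with η(T₀) ≥ 4π, one has |∫_{T₀}^{T₁} σ(η(s))/(1+s) ds| ≤ 6A₁/ζ̃(η(T₀) − 4π), where ζ̃(τ) := (1 + η^{−1}(τ)) η′(η^{−1}(τ)). In particular B₀ := sup_{0≤τ₋≤τ₊<∞} |∫_{τ₋}^{τ₊} σ(η(s))/(1+s) ds| < ∞. -/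

import Mathlib

/-!
Write `ζ(s) = (1 + s) η'(s)`. Each mode `f` of `σ` has a bounded antiderivative `F`, and
`(F ∘ η)' / ζ = (f ∘ η) / (1 + s)`. Integrating by parts against the positive, decreasing weight
`1 / ζ` bounds `∫ₐᵇ f(η s) / (1 + s) ds` by `2 sup |F| / ζ(a)`, uniformly in `b`. Summing over the
modes gives `|∫ₐᵇ σ(η s) / (1 + s) ds| ≤ 2 A₁ / ζ(a)`, which tends to `0` as `a → ∞` because `ζ`
grows at least linearly; this is the Cauchy criterion for the improper integral, and monotonicity
of `ζ` and `η` turns it into the stated bounds.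
-/

open Set Filter Topology intervalIntegral

theorem monotoneOn_of_hasDerivAt_nonneg {D : Set ℝ} (hD : Convex ℝ D) {f f' : ℝ → ℝ}
    (hf : ∀ x ∈ D, HasDerivAt f (f' x) x) (hf' : ∀ x ∈ D, 0 ≤ f' x) : MonotoneOn f D :=
  monotoneOn_of_hasDerivWithinAt_nonneg hD (fun x hx => (hf x hx).continuousAt.continuousWithinAt)
    (fun x hx => (hf x (interior_subset hx)).hasDerivWithinAt)
    (fun x hx => hf' x (interior_subset hx))

theorem strictMonoOn_of_hasDerivAt_pos {D : Set ℝ} (hD : Convex ℝ D) {f f' : ℝ → ℝ}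
    (hf : ∀ x ∈ D, HasDerivAt f (f' x) x) (hf' : ∀ x ∈ D, 0 < f' x) : StrictMonoOn f D :=
  strictMonoOn_of_hasDerivWithinAt_pos hD (fun x hx => (hf x hx).continuousAt.continuousWithinAt)
    (fun x hx => (hf x (interior_subset hx)).hasDerivWithinAt)
    (fun x hx => hf' x (interior_subset hx))

theorem abs_mul_add_mul_le {A B c d : ℝ} (hc : |c| ≤ 1) (hd : |d| ≤ 1) :
    |A * c + B * d| ≤ |A| + |B| :=
  calc |A * c + B * d| ≤ |A| * |c| + |B| * |d| := by
        simpa only [abs_mul] using abs_add_le (A * c) (B * d)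
    _ ≤ |A| * 1 + |B| * 1 := by gcongr
    _ = |A| + |B| := by ring

theorem abs_integral_deriv_mul_le_of_antitone {u u' v v' : ℝ → ℝ} {a b M : ℝ} (hab : a ≤ b)
    (hu : ∀ x ∈ Icc a b, HasDerivAt u (u' x) x) (hu' : ContinuousOn u' (Icc a b))
    (hv : ∀ x ∈ Icc a b, HasDerivAt v (v' x) x) (hv' : ∀ x ∈ Icc a b, v' x ≤ 0)
    (hvb : 0 ≤ v b) (huM : ∀ x ∈ Icc a b, |u x| ≤ M) :
    |∫ x in a..b, u' x * v x| ≤ 2 * M * v a := by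
  have hIcc : uIcc a b = Icc a b := uIcc_of_le hab
  have hIoo : Ioo (min a b) (max a b) ⊆ Icc a b := by
    rw [min_eq_left hab, max_eq_right hab]; exact Ioo_subset_Icc_self
  have hv'int : IntervalIntegrable v' MeasureTheory.volume a b := by
    have h := intervalIntegrable_deriv_of_nonneg (g := fun x => -v x) (g' := fun x => -v' x)
      (hIcc ▸ fun x hx => (hv x hx).continuousAt.neg.continuousWithinAt)
      (fun x hx => (hv x (hIoo hx)).neg) (fun x hx => neg_nonneg.2 (hv' x (hIoo hx)))
    convert h.neg using 1
    ext x
    simp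
  have hibp := integral_mul_deriv_eq_deriv_mul (fun x hx => hu x (hIcc ▸ hx))
    (fun x hx => hv x (hIcc ▸ hx)) (hu'.intervalIntegrable_of_Icc hab) hv'int
  have hvab : v a - v b = ∫ x in a..b, -v' x := by
    rw [intervalIntegral.integral_neg, integral_eq_sub_of_hasDerivAt
      (fun x hx => hv x (hIcc ▸ hx)) hv'int]
    ring
  have hva : v b ≤ v a := by
    have : 0 ≤ ∫ x in a..b, -v' x :=
      intervalIntegral.integral_nonneg hab fun x hx => neg_nonneg.2 (hv' x hx)
    linarith
  have hrest : |∫ x in a..b, u x * v' x| ≤ M * (v a - v b) := by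
    rw [hvab, ← intervalIntegral.integral_const_mul, ← Real.norm_eq_abs]
    refine norm_integral_le_of_norm_le (g := fun x => M * -v' x) hab (.of_forall fun x hx => ?_)
      (hv'int.neg.const_mul M)
    rw [Real.norm_eq_abs, abs_mul, abs_of_nonpos (hv' x (Ioc_subset_Icc_self hx))]
    exact mul_le_mul_of_nonneg_right (huM x (Ioc_subset_Icc_self hx))
      (neg_nonneg.2 (hv' x (Ioc_subset_Icc_self hx)))
  have hend : ∀ x ∈ Icc a b, 0 ≤ v x → |u x * v x| ≤ M * v x := fun x hx hvx => by
    rw [abs_mul, abs_of_nonneg hvx]; exact mul_le_mul_of_nonneg_right (huM x hx) hvx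
  have hb := hend b (right_mem_Icc.2 hab) hvb
  have ha := hend a (left_mem_Icc.2 hab) (hvb.trans hva)
  rw [show ∫ x in a..b, u' x * v x = u b * v b - u a * v a - ∫ x in a..b, u x * v' x by
    linarith]
  linarith [abs_sub (u b * v b - u a * v a) (∫ x in a..b, u x * v' x),
    abs_sub (u b * v b) (u a * v a)]

theorem hasDerivAt_one_add_mul {g : ℝ → ℝ} {g' s : ℝ} (h : HasDerivAt g g' s) :
    HasDerivAt (fun s => (1 + s) * g s) (g s + (1 + s) * g') s :=
  (((hasDerivAt_id' s).const_add 1).fun_mul h).congr_deriv (by ring)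

section WeightedIntegral

variable {η η' η'' : ℝ → ℝ}

theorem intervalIntegrable_comp_div_one_add {f : ℝ → ℝ} {a b : ℝ} (hf : Continuous f)
    (hη : ContinuousOn η (Ici 0)) (ha : 0 ≤ a) (hb : 0 ≤ b) :
    IntervalIntegrable (fun s => f (η s) / (1 + s)) MeasureTheory.volume a b := by
  have hsub : uIcc a b ⊆ Ici 0 := fun s hs => le_trans (le_min ha hb) hs.1
  refine ContinuousOn.intervalIntegrable ?_
  refine (hf.comp_continuousOn (hη.mono hsub)).div (continuousOn_const.add continuousOn_id) ?_
  intro s hs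
  have : (0 : ℝ) ≤ s := hsub hs
  change (1 : ℝ) + s ≠ 0
  positivity

theorem abs_integral_comp_div_one_add_le {F f : ℝ → ℝ} {M a b : ℝ} (ha : 0 ≤ a) (hab : a ≤ b)
    (hF : ∀ x, HasDerivAt F (f x) x) (hf : Continuous f) (hFM : ∀ x, |F x| ≤ M)
    (hηd : ∀ t, 0 ≤ t → HasDerivAt η (η' t) t) (hηd' : ∀ t, 0 ≤ t → HasDerivAt η' (η'' t) t)
    (hη' : ∀ t, 0 ≤ t → 0 < η' t) (hη'' : ∀ t, 0 ≤ t → 0 ≤ η'' t) :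
    |∫ s in a..b, f (η s) / (1 + s)| ≤ 2 * M / ((1 + a) * η' a) := by
  have hs : ∀ s ∈ Icc a b, 0 ≤ s := fun s hs => ha.trans hs.1
  have hζ : ∀ s ∈ Icc a b, 0 < (1 + s) * η' s := fun s h =>
    mul_pos (by linarith [hs s h]) (hη' s (hs s h))
  have hweight : ∀ s ∈ Icc a b,
      f (η s) / (1 + s) = f (η s) * η' s * ((1 + s) * η' s)⁻¹ := fun s h => by
    have := hη' s (hs s h)
    have : 0 < 1 + s := by linarith [hs s h]
    field_simp
  rw [integral_congr fun s h => hweight s (uIcc_of_le hab ▸ h), div_eq_mul_inv]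
  refine abs_integral_deriv_mul_le_of_antitone (v := fun s => ((1 + s) * η' s)⁻¹) hab
    (fun s h => (hF (η s)).comp s (hηd s (hs s h)))
    (fun s h => ((hf.continuousAt.comp (hηd s (hs s h)).continuousAt).mul
      (hηd' s (hs s h)).continuousAt).continuousWithinAt)
    (fun s h => (hasDerivAt_one_add_mul (hηd' s (hs s h))).inv (hζ s h).ne')
    (fun s h => ?_) (inv_nonneg.2 (hζ b (right_mem_Icc.2 hab)).le) (fun s _ => hFM (η s))
  have := hη' s (hs s h)
  have := hη'' s (hs s h)
  have : 0 ≤ 1 + s := by linarith [hs s h]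
  exact div_nonpos_of_nonpos_of_nonneg (neg_nonpos.2 (by positivity)) (sq_nonneg _)

theorem abs_integral_trigMode_comp_div_one_add_le {A B m a b : ℝ} (hm : 1 ≤ m) (ha : 0 ≤ a)
    (hab : a ≤ b)
    (hηd : ∀ t, 0 ≤ t → HasDerivAt η (η' t) t) (hηd' : ∀ t, 0 ≤ t → HasDerivAt η' (η'' t) t)
    (hη' : ∀ t, 0 ≤ t → 0 < η' t) (hη'' : ∀ t, 0 ≤ t → 0 ≤ η'' t) :
    |∫ s in a..b, (A * Real.cos (m * η s) + B * Real.sin (m * η s)) / (1 + s)|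
      ≤ 2 * (|A| + |B|) / ((1 + a) * η' a) := by
  have hm0 : m ≠ 0 := by positivity
  refine abs_integral_comp_div_one_add_le
    (F := fun x => (A * Real.sin (m * x) + -B * Real.cos (m * x)) / m)
    (f := fun x => A * Real.cos (m * x) + B * Real.sin (m * x))
    ha hab (fun x => ?_) (by fun_prop) (fun x => ?_) hηd hηd' hη' hη''
  · have hmx := (hasDerivAt_id' x).const_mul m
    refine (((hmx.sin.const_mul A).fun_add (hmx.cos.const_mul (-B))).div_const m).congr_deriv ?_
    field_simp
  · have hAB := abs_mul_add_mul_le (A := A) (B := -B) (Real.abs_sin_le_one (m * x))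
      (Real.abs_cos_le_one (m * x))
    rw [abs_neg] at hAB
    rw [abs_div, abs_of_pos (by positivity : 0 < m), div_le_iff₀ (by positivity)]
    nlinarith [abs_nonneg A, abs_nonneg B]

noncomputable def trigMode (α β : ℕ → ℝ) (n : ℕ) (x : ℝ) : ℝ :=
  α (n + 1) * Real.cos (((n : ℝ) + 1) * x) + β (n + 1) * Real.sin (((n : ℝ) + 1) * x)

theorem abs_trigMode_le (α β : ℕ → ℝ) (n : ℕ) (x : ℝ) :
    |trigMode α β n x| ≤ |α (n + 1)| + |β (n + 1)| :=
  abs_mul_add_mul_le (Real.abs_cos_le_one _) (Real.abs_sin_le_one _)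

theorem continuous_trigMode (α β : ℕ → ℝ) (n : ℕ) : Continuous (trigMode α β n) := by
  unfold trigMode
  fun_prop

theorem continuous_of_eq_tsum_trigMode {α β : ℕ → ℝ} {σ : ℝ → ℝ}
    (hsum : Summable fun n : ℕ => |α (n + 1)| + |β (n + 1)|)
    (hσ : ∀ x, σ x = ∑' n : ℕ, trigMode α β n x) : Continuous σ :=
  (continuous_tsum (continuous_trigMode α β) hsum (abs_trigMode_le α β)).congr
    fun x => (hσ x).symm

theorem abs_integral_tsum_trigMode_comp_div_one_add_le {α β : ℕ → ℝ} {σ : ℝ → ℝ} {a b : ℝ}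
    (hsum : Summable fun n : ℕ => |α (n + 1)| + |β (n + 1)|)
    (hσ : ∀ x, σ x = ∑' n : ℕ, trigMode α β n x) (ha : 0 ≤ a) (hab : a ≤ b)
    (hηd : ∀ t, 0 ≤ t → HasDerivAt η (η' t) t) (hηd' : ∀ t, 0 ≤ t → HasDerivAt η' (η'' t) t)
    (hη' : ∀ t, 0 ≤ t → 0 < η' t) (hη'' : ∀ t, 0 ≤ t → 0 ≤ η'' t) :
    |∫ s in a..b, σ (η s) / (1 + s)|
      ≤ 2 * (∑' n : ℕ, (|α (n + 1)| + |β (n + 1)|)) / ((1 + a) * η' a) := by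
  have hηc : ContinuousOn η (Ici 0) := fun t ht => (hηd t ht).continuousAt.continuousWithinAt
  have hmodes : HasSum (fun n => ∫ s in a..b, trigMode α β n (η s) / (1 + s))
      (∫ s in a..b, σ (η s) / (1 + s)) := by
    refine hasSum_integral_of_dominated_convergence (fun n _ => |α (n + 1)| + |β (n + 1)|)
      (fun n => (intervalIntegrable_comp_div_one_add (continuous_trigMode α β n) hηc ha
        (ha.trans hab)).def'.aestronglyMeasurable)
      (fun n => .of_forall fun s hs => ?_) (.of_forall fun _ _ => hsum) intervalIntegrable_const
      (.of_forall fun s _ => ?_)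
    · have hs : 0 ≤ s := by rw [uIoc_of_le hab] at hs; exact ha.trans hs.1.le
      rw [Real.norm_eq_abs, abs_div, abs_of_pos (by positivity : (0 : ℝ) < 1 + s)]
      exact (div_le_self (abs_nonneg _) (by linarith)).trans (abs_trigMode_le α β n (η s))
    · rw [hσ]
      exact (hsum.of_norm_bounded (f := (trigMode α β · (η s)))
        (abs_trigMode_le α β · (η s))).hasSum.div_const _
  refine hmodes.norm_le_of_bounded ((hsum.hasSum.mul_left 2).div_const _) fun n => ?_
  exact abs_integral_trigMode_comp_div_one_add_le (A := α (n + 1)) (B := β (n + 1))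
    (m := (n : ℝ) + 1) (by linarith [n.cast_nonneg (α := ℝ)]) ha hab hηd hηd' hη' hη''

end WeightedIntegral

theorem tendsto_const_div_one_add_mul_atTop {g : ℝ → ℝ} (C : ℝ) (hg : MonotoneOn g (Ici 0))
    (hg0 : 0 < g 0) : Tendsto (fun t => C / ((1 + t) * g t)) atTop (𝓝 0) := by
  refine tendsto_const_nhds.div_atTop (tendsto_atTop_mono' atTop ?_
    ((tendsto_atTop_add_const_left atTop 1 tendsto_id).atTop_mul_const hg0))
  filter_upwards [eventually_ge_atTop 0] with t ht
  exact mul_le_mul_of_nonneg_left (hg (mem_Ici.2 le_rfl) ht ht)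
    (by change (0 : ℝ) ≤ 1 + t; linarith)

theorem exists_tendsto_intervalIntegral_of_abs_le {f B : ℝ → ℝ} {c : ℝ}
    (hf : ∀ b, c ≤ b → IntervalIntegrable f MeasureTheory.volume c b)
    (hB : Tendsto B atTop (𝓝 0)) (hfB : ∀ a b, c ≤ a → a ≤ b → |∫ x in a..b, f x| ≤ B a) :
    ∃ l, Tendsto (fun t => ∫ x in c..t, f x) atTop (𝓝 l) := by
  refine cauchySeq_tendsto_of_complete (Metric.cauchySeq_iff'.2 fun ε hε => ?_)
  obtain ⟨N, hNε, hN⟩ := ((hB.eventually (gt_mem_nhds hε)).and (eventually_ge_atTop c)).exists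
  refine ⟨N, fun t ht => ?_⟩
  rw [Real.dist_eq, integral_interval_sub_left (hf t (hN.trans ht)) (hf N hN)]
  exact (hfB N t hN ht).trans_lt hNε

theorem inv_mem_Icc_of_le {η ηinv : ℝ → ℝ} (hη : StrictMonoOn η (Ici 0))
    (hinv₂ : ∀ r, η 0 ≤ r → 0 ≤ ηinv r ∧ η (ηinv r) = r) (hinv₃ : ∀ r, r < η 0 → ηinv r = 0)
    {r t : ℝ} (ht : 0 ≤ t) (hr : r ≤ η t) : ηinv r ∈ Icc 0 t := by
  rcases lt_or_ge r (η 0) with hr0 | hr0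
  · rw [hinv₃ r hr0]
    exact ⟨le_rfl, ht⟩
  · obtain ⟨hpos, hr'⟩ := hinv₂ r hr0
    exact ⟨hpos, (hη.le_iff_le hpos ht).1 (hr'.symm ▸ hr)⟩

theorem oscillatory_dissipation_integral_converges_general
    (α β : ℕ → ℝ) (A₁ : ℝ) (σ : ℝ → ℝ)
    (hsum : Summable fun n : ℕ => |α (n + 1)| + |β (n + 1)|)
    (hA₁ : A₁ = ∑' n : ℕ, (|α (n + 1)| + |β (n + 1)|))
    (hσ : ∀ x : ℝ, σ x = ∑' n : ℕ,
      (α (n + 1) * Real.cos (((n : ℝ) + 1) * x) + β (n + 1) * Real.sin (((n : ℝ) + 1) * x)))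
    (η η' η'' ηinv : ℝ → ℝ)
    (hηd : ∀ t, 0 ≤ t → HasDerivAt η (η' t) t)
    (hηd' : ∀ t, 0 ≤ t → HasDerivAt η' (η'' t) t)
    (hη'pos : ∀ t, 0 ≤ t → 0 < η' t)
    (hη''pos : ∀ t, 0 ≤ t → 0 < η'' t)
    (hinv₂ : ∀ r, η 0 ≤ r → 0 ≤ ηinv r ∧ η (ηinv r) = r)
    (hinv₃ : ∀ r, r < η 0 → ηinv r = 0) :
    (∃ σinf : ℝ, Tendsto (fun t => ∫ s in (0:ℝ)..t, σ (η s) / (1 + s)) atTop (nhds σinf)) ∧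
    (∀ T₀ T₁ : ℝ, 0 ≤ T₀ → T₀ < T₁ → 4 * Real.pi ≤ η T₀ →
      |∫ s in T₀..T₁, σ (η s) / (1 + s)|
        ≤ 6 * A₁ /
          ((1 + ηinv (η T₀ - 4 * Real.pi)) * η' (ηinv (η T₀ - 4 * Real.pi)))) ∧
    (∃ B₀ : ℝ, ∀ τm τp : ℝ, 0 ≤ τm → τm ≤ τp →
      |∫ s in τm..τp, σ (η s) / (1 + s)| ≤ B₀) := by
  have hη'' : ∀ t, 0 ≤ t → 0 ≤ η'' t := fun t ht => (hη''pos t ht).le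
  have hζ : ∀ t, 0 ≤ t → 0 < (1 + t) * η' t := fun t ht => mul_pos (by linarith) (hη'pos t ht)
  have hζmono : MonotoneOn (fun t => (1 + t) * η' t) (Ici 0) :=
    monotoneOn_of_hasDerivAt_nonneg (convex_Ici 0) (fun t ht => hasDerivAt_one_add_mul (hηd' t ht))
      fun t (ht : 0 ≤ t) => add_nonneg (hη'pos t ht).le (mul_nonneg (by linarith) (hη'' t ht))
  have hA₁nonneg : 0 ≤ A₁ := hA₁ ▸ tsum_nonneg fun n => by positivity
  have hbound : ∀ a b, 0 ≤ a → a ≤ b →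
      |∫ s in a..b, σ (η s) / (1 + s)| ≤ 2 * A₁ / ((1 + a) * η' a) := fun a b ha hab => by
    rw [hA₁]
    exact abs_integral_tsum_trigMode_comp_div_one_add_le hsum hσ ha hab hηd hηd' hη'pos hη''
  have hdecay : ∀ a t, 0 ≤ a → a ≤ t → 2 * A₁ / ((1 + t) * η' t) ≤ 2 * A₁ / ((1 + a) * η' a) :=
    fun a t ha hat =>
      div_le_div_of_nonneg_left (by positivity) (hζ a ha) (hζmono ha (ha.trans hat) hat)
  refine ⟨exists_tendsto_intervalIntegral_of_abs_le
      (fun b hb => intervalIntegrable_comp_div_one_add (continuous_of_eq_tsum_trigMode hsum hσ)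
        (fun t ht => (hηd t ht).continuousAt.continuousWithinAt) le_rfl hb)
      (tendsto_const_div_one_add_mul_atTop _
        (monotoneOn_of_hasDerivAt_nonneg (convex_Ici 0) hηd' hη'') (hη'pos 0 le_rfl)) hbound,
    fun T₀ T₁ hT₀ hT₀₁ _ => ?_,
    ⟨_, fun τm τp hτm hτ => (hbound τm τp hτm hτ).trans (hdecay 0 τm le_rfl hτm)⟩⟩
  obtain ⟨hu₀, huT₀⟩ := inv_mem_Icc_of_le (strictMonoOn_of_hasDerivAt_pos (convex_Ici 0) hηd hη'pos)
    hinv₂ hinv₃ hT₀ (by linarith [Real.pi_pos] : η T₀ - 4 * Real.pi ≤ η T₀)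
  calc _ ≤ _ := hbound T₀ T₁ hT₀ hT₀₁.le
    _ ≤ _ := hdecay _ _ hu₀ huT₀
    _ ≤ _ := div_le_div_of_nonneg_right (by linarith) (hζ _ hu₀).le

/-- Convergence of the oscillatory dissipation integral. -/
theorem oscillatory_dissipation_integral_converges
    (α β : ℕ → ℝ) (A₁ : ℝ) (σ : ℝ → ℝ)
    (hsum : Summable fun n : ℕ => |α (n + 1)| + |β (n + 1)|)
    (hA₁ : A₁ = ∑' n : ℕ, (|α (n + 1)| + |β (n + 1)|))
    (hσ : ∀ x : ℝ, σ x = ∑' n : ℕ,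
      (α (n + 1) * Real.cos (((n : ℝ) + 1) * x) + β (n + 1) * Real.sin (((n : ℝ) + 1) * x)))
    (η η' η'' ηinv : ℝ → ℝ)
    (hη0 : 0 ≤ η 0)
    (hηd : ∀ t, 0 ≤ t → HasDerivAt η (η' t) t)
    (hηd' : ∀ t, 0 ≤ t → HasDerivAt η' (η'' t) t)
    (hη'pos : ∀ t, 0 ≤ t → 0 < η' t)
    (hη''pos : ∀ t, 0 ≤ t → 0 < η'' t)
    (hinv₁ : ∀ t, 0 ≤ t → ηinv (η t) = t)
    (hinv₂ : ∀ r, η 0 ≤ r → 0 ≤ ηinv r ∧ η (ηinv r) = r)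
    (hinv₃ : ∀ r, r < η 0 → ηinv r = 0) :
    (∃ σinf : ℝ, Tendsto (fun t => ∫ s in (0:ℝ)..t, σ (η s) / (1 + s)) atTop (nhds σinf)) ∧
    (∀ T₀ T₁ : ℝ, 0 ≤ T₀ → T₀ < T₁ → 4 * Real.pi ≤ η T₀ →
      |∫ s in T₀..T₁, σ (η s) / (1 + s)|
        ≤ 6 * A₁ /
          ((1 + ηinv (η T₀ - 4 * Real.pi)) * η' (ηinv (η T₀ - 4 * Real.pi)))) ∧
    (∃ B₀ : ℝ, ∀ τm τp : ℝ, 0 ≤ τm → τm ≤ τp →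
      |∫ s in τm..τp, σ (η s) / (1 + s)| ≤ B₀) :=
  oscillatory_dissipation_integral_converges_general α β A₁ σ hsum hA₁ hσ η η' η'' ηinv hηd hηd'
    hη'pos hη''pos hinv₂ hinv₃
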